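/- Let m ≥ 1, let t_1, …, t_m ∈ (0,1] and w_1, …, w_m > 0. Let d_A, n ≥ 1 and let ρ be a positive definite Hermitian density matrix on ℂ^{d_A} ⊗ ℂ^n (entries indexed by pairs (a,d) with a ∈ [d_A], d ∈ [n]), with ρ_D its partial trace over the first factor. Then (1/ln 2)·Σ_{i=1}^m w_i · D_{−f_{t_i}}(ρ ‖ I_{d_A} ⊗ ρ_D) = −inf_{Z} Re tr(ρ · P^{(m)}(Z)), where the infimum is over all families Z = {Z_i[a₁,a₂] : i ∈ [m], a₁,a₂ ∈ [d_A]} of n×n complex matrices, and P^{(m)}(Z) is the block matrix on ℂ^{d_A} ⊗ ℂ^n whose (a₁,a₂) block equals Σ_{i=1}^m (w_i/(t_i ln 2))·[ Z_i[a₁,a₂] + Z_i[a₂,a₁]* + (1−t_i)·Σ_{a₃} Z_i[a₃,a₁]*·Z_i[a₃,a₂] + δ_{a₁=a₂}·( I_n + t_i·Σ_{a₃,a₄} Z_i[a₃,a₄]·Z_i[a₃,a₄]* ) ]. -/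

import Mathlib

open scoped ComplexOrder Matrix Kronecker

/-- The function `f_t(x) = (x-1)/(t(x-1)+1)`. -/
noncomputable def ft (t x : ℝ) : ℝ := (x - 1) / (t * (x - 1) + 1)

/-- The standard `(-f_t)`-divergence `D_{-f_t}(ρ‖σ)` of two Hermitian matrices, defined via
spectral decompositions: `D_{-f_t}(ρ‖σ) = -∑_{j : λ_j > 0} ∑_{k : μ_k > 0}
λ_j f_t(μ_k λ_j⁻¹) tr(P_j Q_k)` where `tr(P_j Q_k) = ‖⟨v_j, w_k⟩‖²` for eigenvectors
`v_j` of `ρ` and `w_k` of `σ`. (Junk value `0` if either matrix fails to be Hermitian.) -/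
noncomputable def Dneg {N : Type*} [Fintype N] [DecidableEq N] (t : ℝ)
    (ρ σ : Matrix N N ℂ) : ℝ :=
  if h : ρ.IsHermitian ∧ σ.IsHermitian then
    -∑ j ∈ Finset.univ.filter (fun j => 0 < h.1.eigenvalues j),
      ∑ k ∈ Finset.univ.filter (fun k => 0 < h.2.eigenvalues k),
        h.1.eigenvalues j * ft t (h.2.eigenvalues k * (h.1.eigenvalues j)⁻¹) *
          ‖(inner ℂ (h.1.eigenvectorBasis j) (h.2.eigenvectorBasis k) : ℂ)‖ ^ 2
  else 0

/-- The partial trace over the first tensor factor of a matrix on `ℂ^{d_A} ⊗ ℂ^n`. -/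
noncomputable def ptrFst {dA n : ℕ} (ρ : Matrix (Fin dA × Fin n) (Fin dA × Fin n) ℂ) :
    Matrix (Fin n) (Fin n) ℂ :=
  Matrix.of fun d₁ d₂ => ∑ a : Fin dA, ρ (a, d₁) (a, d₂)

/-- The matrix-valued noncommutative polynomial `P^{(m)}(Z)` on `ℂ^{d_A} ⊗ ℂ^n`, whose
`(a₁,a₂)` block is `∑_i (w_i/(t_i ln 2))·[Z_i[a₁,a₂] + Z_i[a₂,a₁]* +
(1-t_i)·∑_{a₃} Z_i[a₃,a₁]* Z_i[a₃,a₂] + δ_{a₁=a₂}(I + t_i ∑_{a₃,a₄} Z_i[a₃,a₄] Z_i[a₃,a₄]*)]`. -/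
noncomputable def Pmat {m dA n : ℕ} (t w : Fin m → ℝ)
    (Z : Fin m → Fin dA → Fin dA → Matrix (Fin n) (Fin n) ℂ) :
    Matrix (Fin dA × Fin n) (Fin dA × Fin n) ℂ :=
  Matrix.of fun p q =>
    (∑ i, (w i / (t i * Real.log 2)) •
      (Z i p.1 q.1 + (Z i q.1 p.1)ᴴ +
        (1 - t i) • ∑ a₃, (Z i a₃ p.1)ᴴ * Z i a₃ q.1 +
        if p.1 = q.1 then
          (1 : Matrix (Fin n) (Fin n) ℂ) + t i • ∑ a₃, ∑ a₄, Z i a₃ a₄ * (Z i a₃ a₄)ᴴ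
        else 0)) p.2 q.2

open Matrix Set

/-!
Each summand of `Pmat t w Z` is `ncPolyTerm tᵢ W` for the block matrix `W` with blocks `Zᵢ`.
Moving the partial trace across the trace, `Re tr(ρ · ncPolyTerm t W)` is the objective
`2 Re tr(ρW) + (1-t) Re tr(WρW*) + t Re tr(W*σW) + tr ρ` with `σ = I ⊗ ρ_D`.
Writing `ρ = U Λ U*`, `σ = V M V*` and `W = V Y U*`, the objective splits into independent
quadratics `q |y|² + 2 Re(c y) + b` in the entries of `Y`, with `q = (1-t)λⱼ + tμₖ > 0`.
Completing the square, the minimum of each is `λⱼ|Sⱼₖ|² - λⱼ²|Sⱼₖ|²/q = t λⱼ f_t(μₖ/λⱼ) |Sⱼₖ|²`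
where `S = U*V`, so the objective has minimum `-t D_{-f_t}(ρ‖σ)`. The families `Zᵢ` vary
independently, so the infimum of the weighted sum is the weighted sum of these minima.
-/

lemma isLeast_range_sum {ι α β : Type*} [Fintype ι] [AddCommMonoid β] [PartialOrder β]
    [IsOrderedAddMonoid β] {f : ι → α → β} {m : ι → β} (h : ∀ i, IsLeast (range (f i)) (m i)) :
    IsLeast (range fun x : ι → α => ∑ i, f i (x i)) (∑ i, m i) := by
  choose x hx using fun i => (h i).1
  refine ⟨⟨x, Finset.sum_congr rfl fun i _ => hx i⟩, ?_⟩
  rintro _ ⟨y, rfl⟩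
  exact Finset.sum_le_sum fun i _ => (h i).2 ⟨y i, rfl⟩

lemma isLeast_range_quadratic {q : ℝ} (hq : 0 < q) (c : ℂ) (b : ℝ) :
    IsLeast (range fun y : ℂ => q * Complex.normSq y + 2 * (c * y).re + b)
      (b - Complex.normSq c / q) := by
  have hsq : ∀ y : ℂ, q * Complex.normSq y + 2 * (c * y).re + b
      = Complex.normSq (q * y + (starRingEnd ℂ) c) / q + (b - Complex.normSq c / q) := by
    intro y
    rw [Complex.normSq_add, Complex.normSq_mul, Complex.normSq_ofReal, Complex.normSq_conj,
      Complex.conj_conj, mul_assoc (q : ℂ), Complex.re_ofReal_mul, mul_comm y c]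
    field_simp
    ring
  refine ⟨⟨-(starRingEnd ℂ) c / q, ?_⟩, ?_⟩
  · dsimp only
    rw [hsq, mul_div_cancel₀ _ (by exact_mod_cast hq.ne'), neg_add_cancel,
      Complex.normSq_zero, zero_div, zero_add]
  · rintro _ ⟨y, rfl⟩
    dsimp only
    rw [hsq]
    exact le_add_of_nonneg_left (div_nonneg (Complex.normSq_nonneg _) hq.le)

lemma mul_ft_mul_inv {t lam mu : ℝ} (hlam : lam ≠ 0) (hq : (1 - t) * lam + t * mu ≠ 0) :
    t * (lam * ft t (mu * lam⁻¹)) = lam - lam ^ 2 / ((1 - t) * lam + t * mu) := by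
  have hden : t * (mu * lam⁻¹ - 1) + 1 = ((1 - t) * lam + t * mu) / lam := by
    field_simp; ring
  rw [ft, hden]
  set q := (1 - t) * lam + t * mu with hq_def
  field_simp
  linear_combination hq_def

noncomputable def ftObjective {N : Type*} [Fintype N] (t : ℝ) (ρ σ W : Matrix N N ℂ) : ℝ :=
  2 * (trace (ρ * W)).re + (1 - t) * (trace (W * ρ * Wᴴ)).re
    + t * (trace (Wᴴ * σ * W)).re + (trace ρ).re

section Spectral

variable {N : Type*} [Fintype N] [DecidableEq N]

lemma sum_normSq_row_eq_one_of_mem_unitaryGroup {S : Matrix N N ℂ} (hS : S ∈ unitaryGroup N ℂ) (j : N) :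
    ∑ k, Complex.normSq (S j k) = 1 := by
  have h := congrFun (congrFun (mem_unitaryGroup_iff.mp hS) j) j
  simp only [mul_apply, star_apply, one_apply_eq, RCLike.star_def, Complex.mul_conj] at h
  exact_mod_cast h

lemma re_trace_mul_diagonal_mul_conjTranspose (Y : Matrix N N ℂ) (d : N → ℝ) :
    (trace (Y * diagonal (fun j => (d j : ℂ)) * Yᴴ)).re
      = ∑ k, ∑ j, d j * Complex.normSq (Y k j) := by
  simp only [trace, diag, mul_apply, diagonal_apply, mul_ite, mul_zero, Finset.sum_ite_eq',
    Finset.mem_univ, if_true, conjTranspose_apply, Complex.re_sum]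
  refine Finset.sum_congr rfl fun k _ => Finset.sum_congr rfl fun j _ => ?_
  rw [mul_comm (Y k j), mul_assoc, RCLike.star_def, Complex.mul_conj, ← Complex.ofReal_mul,
    Complex.ofReal_re]

lemma re_trace_diagonal_mul (d : N → ℝ) (X : Matrix N N ℂ) :
    (trace (diagonal (fun j => (d j : ℂ)) * X)).re = ∑ j, d j * (X j j).re := by
  simp only [trace, diag, diagonal_mul, Complex.re_sum, Complex.re_ofReal_mul]

lemma ftObjective_unitary_conj {U V : Matrix N N ℂ} (hU : U ∈ unitaryGroup N ℂ)
    (hV : V ∈ unitaryGroup N ℂ) (t : ℝ) (lam mu : N → ℝ) (Y : Matrix N N ℂ) :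
    ftObjective t (U * diagonal (fun j => (lam j : ℂ)) * Uᴴ)
        (V * diagonal (fun k => (mu k : ℂ)) * Vᴴ) (V * Y * Uᴴ)
      = ∑ k, ∑ j, (((1 - t) * lam j + t * mu k) * Complex.normSq (Y k j)
          + 2 * ((lam j * (Uᴴ * V) j k) * Y k j).re + lam j * Complex.normSq ((Uᴴ * V) j k)) := by
  have hU1 : Uᴴ * U = 1 := mem_unitaryGroup_iff'.mp hU
  have hV1 : Vᴴ * V = 1 := mem_unitaryGroup_iff'.mp hV
  have cancelU : ∀ X, Uᴴ * (U * X) = X := fun X => by rw [← Matrix.mul_assoc, hU1, Matrix.one_mul]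
  have cancelV : ∀ X, Vᴴ * (V * X) = X := fun X => by rw [← Matrix.mul_assoc, hV1, Matrix.one_mul]
  have hS : Uᴴ * V ∈ unitaryGroup N ℂ := mul_mem (Unitary.star_mem hU) hV
  have trace_conj : ∀ {A : Matrix N N ℂ}, Aᴴ * A = 1 → ∀ X, trace (A * X * Aᴴ) = trace X :=
    fun hA X => by rw [trace_mul_cycle, hA, Matrix.one_mul]
  set Λ := diagonal (fun j => (lam j : ℂ))
  set M := diagonal (fun k => (mu k : ℂ))
  have h_cross : trace (U * Λ * Uᴴ * (V * Y * Uᴴ)) = trace (Λ * (Uᴴ * V * Y)) := by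
    conv_rhs => rw [← trace_conj hU1]
    simp only [Matrix.mul_assoc]
  have h_left : trace (V * Y * Uᴴ * (U * Λ * Uᴴ) * (V * Y * Uᴴ)ᴴ) = trace (Y * Λ * Yᴴ) := by
    conv_rhs => rw [← trace_conj hV1]
    simp only [conjTranspose_mul, conjTranspose_conjTranspose, Matrix.mul_assoc, cancelU]
  have h_right : trace ((V * Y * Uᴴ)ᴴ * (V * M * Vᴴ) * (V * Y * Uᴴ)) = trace (Yᴴ * M * Yᴴᴴ) := by
    conv_rhs => rw [← trace_conj hU1]
    simp only [conjTranspose_mul, conjTranspose_conjTranspose, Matrix.mul_assoc, cancelV]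
  have h_tr : (trace (U * Λ * Uᴴ)).re = ∑ j, lam j * ∑ k, Complex.normSq ((Uᴴ * V) j k) := by
    simp [trace_conj hU1, Λ, sum_normSq_row_eq_one_of_mem_unitaryGroup hS]
  rw [ftObjective, h_cross, h_left, h_right, h_tr, re_trace_diagonal_mul,
    re_trace_mul_diagonal_mul_conjTranspose, re_trace_mul_diagonal_mul_conjTranspose]
  have h_cross_re : ∀ j, ((Uᴴ * V * Y) j j).re = ∑ k, ((Uᴴ * V) j k * Y k j).re := fun j => by
    rw [mul_apply, Complex.re_sum]
  have h_swap : ∑ k, ∑ j, lam j * Complex.normSq (Y k j)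
      = ∑ j, ∑ k, lam j * Complex.normSq (Y k j) := Finset.sum_comm
  rw [h_swap]
  conv_rhs => rw [Finset.sum_comm]
  simp only [h_cross_re, conjTranspose_apply, RCLike.star_def, Complex.normSq_conj,
    Finset.mul_sum, ← Finset.sum_add_distrib]
  refine Finset.sum_congr rfl fun j _ => Finset.sum_congr rfl fun k _ => ?_
  rw [mul_assoc, Complex.re_ofReal_mul]
  ring

lemma Dneg_eq_sum (t : ℝ) {ρ σ : Matrix N N ℂ} (hρ : ρ.PosDef) (hσ : σ.PosDef) :
    Dneg t ρ σ = -∑ j, ∑ k,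
      hρ.1.eigenvalues j * ft t (hσ.1.eigenvalues k * (hρ.1.eigenvalues j)⁻¹) *
        Complex.normSq (((hρ.1.eigenvectorUnitary : Matrix N N ℂ)ᴴ *
          (hσ.1.eigenvectorUnitary : Matrix N N ℂ)) j k) := by
  rw [Dneg, dif_pos ⟨hρ.1, hσ.1⟩, Finset.filter_true_of_mem fun j _ => hρ.eigenvalues_pos j,
    Finset.filter_true_of_mem fun k _ => hσ.eigenvalues_pos k]
  congr 1
  refine Finset.sum_congr rfl fun j _ => Finset.sum_congr rfl fun k _ => ?_
  rw [← Complex.sq_norm]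
  congr 3
  simp [mul_apply, EuclideanSpace.inner_eq_star_dotProduct, dotProduct, mul_comm]

theorem isLeast_ftObjective {t : ℝ} (ht0 : 0 < t) (ht1 : t ≤ 1) {ρ σ : Matrix N N ℂ}
    (hρ : ρ.PosDef) (hσ : σ.PosDef) :
    IsLeast (range (ftObjective t ρ σ)) (-(t * Dneg t ρ σ)) := by
  set U : Matrix N N ℂ := (hρ.1.eigenvectorUnitary : Matrix N N ℂ)
  set V : Matrix N N ℂ := (hσ.1.eigenvectorUnitary : Matrix N N ℂ)
  set lam := hρ.1.eigenvalues
  set mu := hσ.1.eigenvalues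
  have hU : U ∈ unitaryGroup N ℂ := hρ.1.eigenvectorUnitary.2
  have hV : V ∈ unitaryGroup N ℂ := hσ.1.eigenvectorUnitary.2
  have hUU : U * Uᴴ = 1 := mem_unitaryGroup_iff.mp hU
  have hVV : V * Vᴴ = 1 := mem_unitaryGroup_iff.mp hV
  have hq : ∀ j k, 0 < (1 - t) * lam j + t * mu k := fun j k => by
    nlinarith [hρ.eigenvalues_pos j, hσ.eigenvalues_pos k]
  have hρ_eq : ρ = U * diagonal (fun j => (lam j : ℂ)) * Uᴴ := hρ.1.spectral_theorem
  have hσ_eq : σ = V * diagonal (fun k => (mu k : ℂ)) * Vᴴ := hσ.1.spectral_theorem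
  have h_surj : Function.Surjective fun Y => V * Y * Uᴴ := fun W =>
    ⟨Vᴴ * W * U, by
      simp only [Matrix.mul_assoc]
      rw [hUU, Matrix.mul_one, ← Matrix.mul_assoc, hVV, Matrix.one_mul]⟩
  have h_min := isLeast_range_sum fun k => isLeast_range_sum fun j =>
    isLeast_range_quadratic (hq j k) (lam j * (Uᴴ * V) j k) (lam j * Complex.normSq ((Uᴴ * V) j k))
  have h_obj : ftObjective t ρ σ ∘ (fun Y => V * Y * Uᴴ) = fun Y => ∑ k, ∑ j,
      (((1 - t) * lam j + t * mu k) * Complex.normSq (Y k j)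
        + 2 * ((lam j * (Uᴴ * V) j k) * Y k j).re + lam j * Complex.normSq ((Uᴴ * V) j k)) := by
    funext Y
    rw [Function.comp_apply, ← ftObjective_unitary_conj hU hV, ← hρ_eq, ← hσ_eq]
  have h_val : -(t * Dneg t ρ σ) = ∑ k, ∑ j, (lam j * Complex.normSq ((Uᴴ * V) j k)
      - Complex.normSq (lam j * (Uᴴ * V) j k) / ((1 - t) * lam j + t * mu k)) := by
    rw [Dneg_eq_sum t hρ hσ, Finset.sum_comm, mul_neg, neg_neg, Finset.mul_sum]
    refine Finset.sum_congr rfl fun k _ => ?_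
    rw [Finset.mul_sum]
    refine Finset.sum_congr rfl fun j _ => ?_
    rw [Complex.normSq_mul, Complex.normSq_ofReal]
    linear_combination Complex.normSq ((Uᴴ * V) j k) *
      mul_ft_mul_inv (hρ.eigenvalues_pos j).ne' (hq j k).ne'
  rw [← h_surj.range_comp, h_obj, h_val]
  exact h_min

end Spectral

noncomputable def ncPolyTerm {dA n : ℕ} (t : ℝ) (W : Matrix (Fin dA × Fin n) (Fin dA × Fin n) ℂ) :
    Matrix (Fin dA × Fin n) (Fin dA × Fin n) ℂ :=
  W + Wᴴ + (1 - t) • (Wᴴ * W) + 1 + t • ((1 : Matrix (Fin dA) (Fin dA) ℂ) ⊗ₖ ptrFst (W * Wᴴ))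

def blockEquiv (dA n : ℕ) :
    (Fin dA → Fin dA → Matrix (Fin n) (Fin n) ℂ) ≃ Matrix (Fin dA × Fin n) (Fin dA × Fin n) ℂ :=
  Matrix.of.trans (Matrix.comp _ _ _ _ ℂ)

@[simp]
lemma blockEquiv_apply {dA n : ℕ} (Z : Fin dA → Fin dA → Matrix (Fin n) (Fin n) ℂ)
    (p q : Fin dA × Fin n) : blockEquiv dA n Z p q = Z p.1 q.1 p.2 q.2 :=
  rfl

section PartialTrace

variable {dA n : ℕ}

lemma trace_mul_one_kronecker (A : Matrix (Fin dA × Fin n) (Fin dA × Fin n) ℂ)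
    (X : Matrix (Fin n) (Fin n) ℂ) :
    trace (A * ((1 : Matrix (Fin dA) (Fin dA) ℂ) ⊗ₖ X)) = trace (ptrFst A * X) := by
  simp only [trace, diag, mul_apply, kroneckerMap_apply, one_apply, ptrFst, of_apply,
    Fintype.sum_prod_type, ite_mul, one_mul, zero_mul, mul_ite, mul_zero, Finset.sum_mul,
    Finset.sum_ite_irrel, Finset.sum_const_zero, Finset.sum_ite_eq', Finset.mem_univ, if_true]
  rw [Finset.sum_comm]
  exact Finset.sum_congr rfl fun _ _ => Finset.sum_comm

lemma ptrFst_eq_sum_submatrix (ρ : Matrix (Fin dA × Fin n) (Fin dA × Fin n) ℂ) :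
    ptrFst ρ = ∑ a, ρ.submatrix (Prod.mk a) (Prod.mk a) := by
  ext d₁ d₂
  simp [ptrFst, Matrix.sum_apply]

lemma Matrix.PosDef.ptrFst [Nonempty (Fin dA)] {ρ : Matrix (Fin dA × Fin n) (Fin dA × Fin n) ℂ}
    (hρ : ρ.PosDef) : (ptrFst ρ).PosDef := by
  rw [ptrFst_eq_sum_submatrix]
  exact posDef_sum Finset.univ_nonempty fun a _ => hρ.submatrix (Prod.mk_right_injective a)

lemma Pmat_eq_sum {m : ℕ} (t w : Fin m → ℝ)
    (Z : Fin m → Fin dA → Fin dA → Matrix (Fin n) (Fin n) ℂ) :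
    Pmat t w Z = ∑ i, (w i / (t i * Real.log 2)) •
      ncPolyTerm (t i) (blockEquiv dA n (Z i)) := by
  ext p q
  simp only [Pmat, of_apply, Matrix.sum_apply, Matrix.smul_apply]
  refine Finset.sum_congr rfl fun i _ => ?_
  congr 1
  by_cases h : p.1 = q.1
  · simp [ncPolyTerm, h, mul_apply, Fintype.sum_prod_type, ptrFst, one_apply, Prod.ext_iff,
      Matrix.sum_apply]
    ring
  · simp [ncPolyTerm, h, mul_apply, Fintype.sum_prod_type, one_apply, Prod.ext_iff,
      Matrix.sum_apply]

lemma re_trace_mul_ncPolyTerm (t : ℝ) {ρ : Matrix (Fin dA × Fin n) (Fin dA × Fin n) ℂ}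
    (hρ : ρ.IsHermitian) (W : Matrix (Fin dA × Fin n) (Fin dA × Fin n) ℂ) :
    (trace (ρ * ncPolyTerm t W)).re
      = ftObjective t ρ ((1 : Matrix (Fin dA) (Fin dA) ℂ) ⊗ₖ ptrFst ρ) W := by
  have h_adj : trace (ρ * Wᴴ) = star (trace (ρ * W)) := by
    rw [← trace_conjTranspose, conjTranspose_mul, hρ.eq, trace_mul_comm]
  have h_left : trace (ρ * (Wᴴ * W)) = trace (W * ρ * Wᴴ) := by
    rw [← Matrix.mul_assoc, trace_mul_cycle]
  have h_right : trace (ρ * ((1 : Matrix (Fin dA) (Fin dA) ℂ) ⊗ₖ ptrFst (W * Wᴴ)))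
      = trace (Wᴴ * ((1 : Matrix (Fin dA) (Fin dA) ℂ) ⊗ₖ ptrFst ρ) * W) := by
    rw [trace_mul_one_kronecker, trace_mul_comm, ← trace_mul_one_kronecker, trace_mul_cycle Wᴴ]
  simp only [ncPolyTerm, Matrix.mul_add, trace_add, Complex.add_re, Matrix.mul_one,
    Matrix.mul_smul, trace_smul, h_adj, h_left, h_right, Complex.smul_re, smul_eq_mul,
    RCLike.star_def, Complex.conj_re, ftObjective]
  ring

end PartialTrace

theorem weighted_divergence_ncpoly_general (m : ℕ) (t w : Fin m → ℝ)
    (ht : ∀ i, t i ∈ Set.Ioc (0 : ℝ) 1) (hw : ∀ i, 0 < w i)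
    (dA n : ℕ) (hdA : 1 ≤ dA)
    (ρ : Matrix (Fin dA × Fin n) (Fin dA × Fin n) ℂ)
    (hρ : ρ.PosDef) :
    (1 / Real.log 2) *
        ∑ i, w i * Dneg (t i) ρ ((1 : Matrix (Fin dA) (Fin dA) ℂ) ⊗ₖ ptrFst ρ) =
      -⨅ Z : Fin m → Fin dA → Fin dA → Matrix (Fin n) (Fin n) ℂ,
        (Matrix.trace (ρ * Pmat t w Z)).re := by
  have : Nonempty (Fin dA) := ⟨⟨0, hdA⟩⟩
  set σ := (1 : Matrix (Fin dA) (Fin dA) ℂ) ⊗ₖ ptrFst ρ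
  have hσ : σ.PosDef := PosDef.one.kronecker hρ.ptrFst
  have hlog : 0 < Real.log 2 := Real.log_pos one_lt_two
  have hc : ∀ i, 0 ≤ w i / (t i * Real.log 2) := fun i =>
    div_nonneg (hw i).le (mul_nonneg (ht i).1.le hlog.le)
  have h_min : IsLeast (range fun Z : Fin m → Fin dA → Fin dA → Matrix (Fin n) (Fin n) ℂ =>
      (trace (ρ * Pmat t w Z)).re) (∑ i, w i / (t i * Real.log 2) * -(t i * Dneg (t i) ρ σ)) := by
    simp only [Pmat_eq_sum, Matrix.mul_sum, trace_sum, Complex.re_sum, Matrix.mul_smul, trace_smul,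
      Complex.smul_re, smul_eq_mul, re_trace_mul_ncPolyTerm _ hρ.1]
    refine isLeast_range_sum
      (f := fun i Y => w i / (t i * Real.log 2) * ftObjective (t i) ρ σ (blockEquiv dA n Y))
      fun i => ?_
    have h := isLeast_ftObjective (ht i).1 (ht i).2 hρ hσ
    rw [← (blockEquiv dA n).surjective.range_comp] at h
    have h_scaled := (monotone_mul_left_of_nonneg (hc i)).map_isLeast h
    rwa [← range_comp] at h_scaled
  rw [h_min.isGLB.ciInf_eq, Finset.mul_sum, ← Finset.sum_neg_distrib]
  refine Finset.sum_congr rfl fun i _ => ?_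
  have := (ht i).1.ne'
  field_simp

/-- Variational expression for the weighted sum of `(-f_{t_i})`-divergences of a positive
definite density matrix `ρ` on `ℂ^{d_A} ⊗ ℂ^n` relative to `I_A ⊗ ρ_D`:
`(1/ln 2)·∑_i w_i D_{-f_{t_i}}(ρ‖I_A ⊗ ρ_D) = -inf_Z Re tr(ρ·P^{(m)}(Z))`, infimum over all
families `Z = {Z_i[a₁,a₂]}` of `n × n` complex matrices. -/
theorem weighted_divergence_ncpoly (m : ℕ) (hm : 1 ≤ m) (t w : Fin m → ℝ)
    (ht : ∀ i, t i ∈ Set.Ioc (0 : ℝ) 1) (hw : ∀ i, 0 < w i)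
    (dA n : ℕ) (hdA : 1 ≤ dA) (hn : 1 ≤ n)
    (ρ : Matrix (Fin dA × Fin n) (Fin dA × Fin n) ℂ)
    (hρ : ρ.PosDef) (hρtr : ρ.trace = 1) :
    (1 / Real.log 2) *
        ∑ i, w i * Dneg (t i) ρ ((1 : Matrix (Fin dA) (Fin dA) ℂ) ⊗ₖ ptrFst ρ) =
      -⨅ Z : Fin m → Fin dA → Fin dA → Matrix (Fin n) (Fin n) ℂ,
        (Matrix.trace (ρ * Pmat t w Z)).re :=
  weighted_divergence_ncpoly_general m t w ht hw dA n hdA ρ hρ
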